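/- arXiv:1105.4680 — 6 statements merged into one kernel-verified Lean document; each statement's English description precedes it below -/
import Mathlib

section
/- If Q_1 and Q_2 are symmetric n×n rate matrices (zero column sums, symmetric) and their commutator [Q_1,Q_2] = Q_1 Q_2 - Q_2 Q_1 satisfies [Q_1,Q_2] D(π) = D(π) [Q_1,Q_2]^T for some vector π with all entries positive, then [Q_1,Q_2] = 0. -/
open Matrix

theorem commutator_of_symmetric_rate_matrices_gtr_implies_zero {n : ℕ}
    (Q₁ Q₂ : Matrix (Fin n) (Fin n) ℝ)
    (hrate₁ : ∀ j, ∑ i, Q₁ i j = 0) (hrate₂ : ∀ j, ∑ i, Q₂ i j = 0)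
    (hsym₁ : Q₁.transpose = Q₁) (hsym₂ : Q₂.transpose = Q₂)
    (π : Fin n → ℝ) (hπ : ∀ i, 0 < π i)
    (hgtr : (Q₁ * Q₂ - Q₂ * Q₁) * Matrix.diagonal π
        = Matrix.diagonal π * (Q₁ * Q₂ - Q₂ * Q₁).transpose) :
    Q₁ * Q₂ - Q₂ * Q₁ = 0 := by
  have hT : (Q₁ * Q₂ - Q₂ * Q₁).transpose = -(Q₁ * Q₂ - Q₂ * Q₁) := by
    rw [transpose_sub, transpose_mul, transpose_mul, hsym₁, hsym₂]
    exact (neg_sub _ _).symm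
  rw [hT] at hgtr
  ext i j
  have h := congrFun (congrFun hgtr i) j
  simp [Matrix.mul_apply, Matrix.diagonal, Finset.sum_ite_eq, Finset.sum_ite_eq'] at h
  have hpos : π j + π i > 0 := by have := hπ i; have := hπ j; linarith
  have : (Q₁ * Q₂ - Q₂ * Q₁) i j * (π j + π i) = 0 := by
    have h' : (Q₁ * Q₂ - Q₂ * Q₁) i j * π j = -(π i * (Q₁ * Q₂ - Q₂ * Q₁) i j) := by
      simpa [Matrix.mul_apply, Finset.mul_sum, Finset.sum_sub_distrib, mul_comm,
        mul_sub, sub_mul] using h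
    ring_nf
    ring_nf at h'
    linarith
  have := mul_eq_zero.mp this
  rcases this with h0 | h0
  · simpa using h0
  · exact absurd h0 (ne_of_gt hpos)
end

section
/- The set of GTR rate matrices, i.e. rate matrices Q for which there exists a distribution vector π (all entries positive, summing to 1) with Q D(π) = D(π) Q^T, is not closed under the Lie bracket [Q_1,Q_2] = Q_1Q_2 - Q_2Q_1; that is, for n ≥ 3 there exist GTR rate matrices Q_1, Q_2 whose commutator is nonzero and is not a GTR rate matrix. -/
open Matrix

/-- `Q` is a rate matrix: each column sums to zero. -/
def IsRateMatrix {n : ℕ} (Q : Matrix (Fin n) (Fin n) ℝ) : Prop :=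
  ∀ j, ∑ i, Q i j = 0

/-- `π` is a distribution vector: strictly positive entries summing to 1. -/
def IsDistribVec {n : ℕ} (π : Fin n → ℝ) : Prop :=
  (∀ i, 0 < π i) ∧ ∑ i, π i = 1

/-- `Q` is a GTR rate matrix: a rate matrix with `Q D(π) = D(π) Qᵀ` for some
distribution vector `π`. -/
def IsGTRRateMatrix {n : ℕ} (Q : Matrix (Fin n) (Fin n) ℝ) : Prop :=
  IsRateMatrix Q ∧ ∃ π : Fin n → ℝ, IsDistribVec π ∧
    Q * Matrix.diagonal π = Matrix.diagonal π * Q.transpose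

/-- auxiliary vector `e_a - e_b`. -/
def diffVec {n : ℕ} (a b : Fin n) : Fin n → ℝ :=
  fun i => if i = a then 1 else if i = b then -1 else 0

lemma diffVec_sum {n : ℕ} (a b : Fin n) (hab : a ≠ b) : ∑ i, diffVec a b i = 0 := by
  have key : ∀ i : Fin n, diffVec a b i =
      (if i = a then (1:ℝ) else 0) + (if i = b then -1 else 0) := by
    intro i
    by_cases e1 : i = a
    · subst e1; simp [diffVec, hab]
    · simp [diffVec, e1]
  rw [Finset.sum_congr rfl fun i _ => key i, Finset.sum_add_distrib]
  simp

theorem gtr_not_closed_under_lie_bracket {n : ℕ} (hn : 3 ≤ n) :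
    ∃ Q₁ Q₂ : Matrix (Fin n) (Fin n) ℝ,
      IsGTRRateMatrix Q₁ ∧ IsGTRRateMatrix Q₂ ∧
      Q₁ * Q₂ - Q₂ * Q₁ ≠ 0 ∧ ¬ IsGTRRateMatrix (Q₁ * Q₂ - Q₂ * Q₁) := by
  have h0 : 0 < n := by omega
  have h1 : 1 < n := by omega
  have h2 : 2 < n := by omega
  set a : Fin n := ⟨0, h0⟩ with ha
  set b : Fin n := ⟨1, h1⟩ with hb
  set c : Fin n := ⟨2, h2⟩ with hc
  have hab : a ≠ b := by simp [ha, hb, Fin.ext_iff]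
  have hac : a ≠ c := by simp [ha, hc, Fin.ext_iff]
  have hbc : b ≠ c := by simp [hb, hc, Fin.ext_iff]
  have hvsum : ∑ i, diffVec a b i = 0 := diffVec_sum a b hab
  have hwsum : ∑ i, diffVec b c i = 0 := diffVec_sum b c hbc
  have hS : ∑ k, diffVec a b k * diffVec b c k = -1 := by
    have key : ∀ k, diffVec a b k * diffVec b c k = if k = b then (-1:ℝ) else 0 := by
      intro k
      by_cases e2 : k = b
      · subst e2; simp [diffVec, Ne.symm hab, hbc]
      · by_cases e1 : k = a
        · subst e1; simp [diffVec, e2, hac]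
        · simp [diffVec, e1, e2]
    rw [Finset.sum_congr rfl fun k _ => key k]
    simp
  set Q₁ : Matrix (Fin n) (Fin n) ℝ :=
    Matrix.of fun i j => -(diffVec a b i * diffVec a b j) with hQ₁
  set Q₂ : Matrix (Fin n) (Fin n) ℝ :=
    Matrix.of fun i j => -(diffVec b c i * diffVec b c j) with hQ₂
  set π : Fin n → ℝ := fun _ => 1 / n with hπ
  have hπd : IsDistribVec π := by
    constructor
    · intro i; positivity
    · simp [hπ, Finset.sum_const, Finset.card_univ]
      field_simp
  have hgtr : ∀ u : Fin n → ℝ, (∑ i, u i = 0) →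
      IsGTRRateMatrix (Matrix.of fun i j => -(u i * u j)) := by
    intro u hu
    constructor
    · intro j
      have : ∑ i, -((u i) * u j) = -((∑ i, u i) * u j) := by
        rw [Finset.sum_mul, ← Finset.sum_neg_distrib]
      simpa [hu] using this
    · refine ⟨π, hπd, ?_⟩
      ext i j
      simp [Matrix.mul_diagonal, Matrix.diagonal_mul, Matrix.transpose_apply, hπ]
      ring
  have hmul12 : ∀ i j, (Q₁ * Q₂) i j = -(diffVec a b i * diffVec b c j) := by
    intro i j
    rw [Matrix.mul_apply]
    have key : ∀ k, Q₁ i k * Q₂ k j =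
        (diffVec a b i * diffVec b c j) * (diffVec a b k * diffVec b c k) := by
      intro k; simp [hQ₁, hQ₂]; ring
    rw [Finset.sum_congr rfl fun k _ => key k, ← Finset.mul_sum, hS]
    ring
  have hmul21 : ∀ i j, (Q₂ * Q₁) i j = -(diffVec b c i * diffVec a b j) := by
    intro i j
    rw [Matrix.mul_apply]
    have hS' : ∑ k, diffVec b c k * diffVec a b k = -1 := by
      rw [Finset.sum_congr rfl fun k _ => mul_comm (diffVec b c k) (diffVec a b k), hS]
    have key : ∀ k, Q₂ i k * Q₁ k j =
        (diffVec b c i * diffVec a b j) * (diffVec b c k * diffVec a b k) := by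
      intro k; simp [hQ₁, hQ₂]; ring
    rw [Finset.sum_congr rfl fun k _ => key k, ← Finset.mul_sum, hS']
    ring
  set C : Matrix (Fin n) (Fin n) ℝ := Q₁ * Q₂ - Q₂ * Q₁ with hC
  have hwa : diffVec b c a = 0 := by simp [diffVec, hab, hac]
  have hva : diffVec a b a = 1 := by simp [diffVec]
  have hwc : diffVec b c c = -1 := by simp [diffVec, Ne.symm hbc]
  have hvc : diffVec a b c = 0 := by simp [diffVec, hac.symm, hbc.symm]
  have hCac : C a c = 1 := by
    simp only [hC, Matrix.sub_apply, hmul12, hmul21, hwa, hva, hwc, hvc]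
    ring
  have hCca : C c a = -1 := by
    simp only [hC, Matrix.sub_apply, hmul12, hmul21, hwa, hva, hwc, hvc]
    ring
  refine ⟨Q₁, Q₂, hgtr _ hvsum, hgtr _ hwsum, ?_, ?_⟩
  · intro h
    have h' := congrFun (congrFun h a) c
    rw [Matrix.zero_apply] at h'
    rw [← hC] at h'
    rw [hCac] at h'
    norm_num at h'
  · rintro ⟨_, p, ⟨hppos, _⟩, heq⟩
    rw [← hC] at heq
    have h2 : (C * Matrix.diagonal p) a c = (Matrix.diagonal p * Cᵀ) a c := by
      rw [heq]
    rw [Matrix.mul_diagonal, Matrix.diagonal_mul, Matrix.transpose_apply, hCac, hCca] at h2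
    have hpa := hppos a
    have hpc := hppos c
    nlinarith
end

section
/- If M_1 and M_2 are symmetric Markov matrices (unit column sums), M_1 M_2 has strictly positive entries, and there exists a distribution vector π with M_1 M_2 D(π) = D(π)(M_1 M_2)^T, then M_1 M_2 = M_2 M_1. -/
open Matrix

theorem symmetric_markov_product_gtr_implies_commute {n : ℕ}
    (M₁ M₂ : Matrix (Fin n) (Fin n) ℝ)
    (hnn₁ : ∀ i j, 0 ≤ M₁ i j) (hnn₂ : ∀ i j, 0 ≤ M₂ i j)
    (hcol₁ : ∀ j, ∑ i, M₁ i j = 1) (hcol₂ : ∀ j, ∑ i, M₂ i j = 1)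
    (hsym₁ : M₁.transpose = M₁) (hsym₂ : M₂.transpose = M₂)
    (hpos : ∀ i j, 0 < (M₁ * M₂) i j)
    (π : Fin n → ℝ) (hπpos : ∀ i, 0 < π i) (hπsum : ∑ i, π i = 1)
    (hgtr : (M₁ * M₂) * Matrix.diagonal π
        = Matrix.diagonal π * (M₁ * M₂).transpose) :
    M₁ * M₂ = M₂ * M₁ := by
  set A := M₁ * M₂ with hA
  -- entrywise detailed balance
  have hdb : ∀ i j, A i j * π j = π i * A j i := by
    intro i j
    have h := congrFun (congrFun hgtr i) j
    simpa [Matrix.mul_diagonal, Matrix.diagonal_mul, Matrix.transpose_apply] using h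
  -- row sums of M₁, M₂ are 1 (symmetric)
  have hrow₁ : ∀ i, ∑ j, M₁ i j = 1 := by
    intro i
    have : ∀ j, M₁ i j = M₁ j i := fun j =>
      (congrFun (congrFun hsym₁ i) j).symm
    simp only [this]; exact hcol₁ i
  have hrow₂ : ∀ i, ∑ j, M₂ i j = 1 := by
    intro i
    have : ∀ j, M₂ i j = M₂ j i := fun j =>
      (congrFun (congrFun hsym₂ i) j).symm
    simp only [this]; exact hcol₂ i
  -- row sums of A are 1
  have hrowA : ∀ i, ∑ j, A i j = 1 := by
    intro i
    calc ∑ j, A i j = ∑ j, ∑ k, M₁ i k * M₂ k j := by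
          simp [hA, Matrix.mul_apply]
      _ = ∑ k, ∑ j, M₁ i k * M₂ k j := Finset.sum_comm
      _ = ∑ k, M₁ i k * ∑ j, M₂ k j := by simp [Finset.mul_sum]
      _ = ∑ k, M₁ i k := by simp [hrow₂]
      _ = 1 := hrow₁ i
  -- column sums of A are 1
  have hcolA : ∀ j, ∑ i, A i j = 1 := by
    intro j
    calc ∑ i, A i j = ∑ i, ∑ k, M₁ i k * M₂ k j := by
          simp [hA, Matrix.mul_apply]
      _ = ∑ k, (∑ i, M₁ i k) * M₂ k j := by
          rw [Finset.sum_comm]; simp [Finset.sum_mul]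
      _ = ∑ k, M₂ k j := by simp [hcol₁]
      _ = 1 := hcol₂ j
  -- stationarity : A π = π
  have hstat : ∀ i, ∑ j, A i j * π j = π i := by
    intro i
    calc ∑ j, A i j * π j = ∑ j, π i * A j i := by
          exact Finset.sum_congr rfl fun j _ => hdb i j
      _ = π i * ∑ j, A j i := by rw [Finset.mul_sum]
      _ = π i := by rw [hcolA i, mul_one]
  -- Fin n is nonempty
  have hne : Nonempty (Fin n) := by
    by_contra h
    rw [not_nonempty_iff] at h
    simp at hπsum
  -- π is constant, by maximum principle
  obtain ⟨i0, -, hi0⟩ := Finset.exists_max_image Finset.univ π Finset.univ_nonempty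
  have hconst : ∀ j, π j = π i0 := by
    by_contra h
    push_neg at h
    obtain ⟨j0, hj0⟩ := h
    have hj0' : π j0 < π i0 := lt_of_le_of_ne (hi0 j0 (Finset.mem_univ _)) hj0
    have hlt : ∑ j, A i0 j * π j < ∑ j, A i0 j * π i0 := by
      apply Finset.sum_lt_sum
      · intro j _
        exact mul_le_mul_of_nonneg_left (hi0 j (Finset.mem_univ _)) (le_of_lt (hpos i0 j))
      · exact ⟨j0, Finset.mem_univ _, by
          exact mul_lt_mul_of_pos_left hj0' (hpos i0 j0)⟩
    rw [hstat i0] at hlt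
    rw [← Finset.sum_mul, hrowA i0, one_mul] at hlt
    exact lt_irrefl _ hlt
  -- A is symmetric
  have hAsym : ∀ i j, A i j = A j i := by
    intro i j
    have h := hdb i j
    rw [hconst i, hconst j] at h
    have hp : (0:ℝ) < π i0 := hπpos i0
    rw [mul_comm] at h
    exact mul_left_cancel₀ (ne_of_gt hp) h
  have hAT : A.transpose = A := by
    ext i j
    exact hAsym j i
  calc M₁ * M₂ = A := rfl
    _ = A.transpose := hAT.symm
    _ = M₂.transpose * M₁.transpose := by rw [hA, Matrix.transpose_mul]
    _ = M₂ * M₁ := by rw [hsym₁, hsym₂]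
end

section
/- For n ≥ 3, the GTR model is not multiplicatively closed: there exist symmetric n×n Markov matrices M_1, M_2 such that no distribution vector π satisfies M_1 M_2 D(π) = D(π)(M_1M_2)^T. -/
/-! Transposition matrices are symmetric Markov matrices, but the product of two overlapping
transpositions is the matrix of a 3-cycle `σ`. Reversibility `M D(π) = D(π) Mᵀ` reads entrywise
`M i j π j = π i M j i`; at `(a, σ a)` it gives `π (σ a) = π a · 0`, because `σ (σ a) ≠ a`. -/

open Matrix Equiv

section Reversibility

variable {ι R : Type*} [Fintype ι] [DecidableEq ι] [Semiring R]

lemma apply_mul_eq_mul_apply_of_mul_diagonal_eq {M : Matrix ι ι R} {π : ι → R}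
    (h : M * diagonal π = diagonal π * Mᵀ) (i j : ι) : M i j * π j = π i * M j i := by
  simpa only [mul_diagonal, diagonal_mul, transpose_apply] using congr_fun (congr_fun h i) j

lemma permMatrix_mul_diagonal_ne {σ : Perm ι} {π : ι → R} {a : ι} (hσ : σ (σ a) ≠ a)
    (hπ : π (σ a) ≠ 0) : σ.permMatrix R * diagonal π ≠ diagonal π * (σ.permMatrix R)ᵀ := by
  intro h
  have := apply_mul_eq_mul_apply_of_mul_diagonal_eq h a (σ a)
  exact hπ (by simpa [toPEquiv_apply, hσ] using this)

end Reversibility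

lemma swap_mul_swap_apply_apply_ne {α : Type*} [DecidableEq α] {a b c : α} (hab : a ≠ b)
    (hac : a ≠ c) (hbc : b ≠ c) : (swap b c * swap a b) ((swap b c * swap a b) a) ≠ a := by
  simp [swap_apply_of_ne_of_ne, hab.symm, hac.symm, hbc.symm]

theorem gtr_not_multiplicatively_closed {n : ℕ} (hn : 3 ≤ n) :
    ∃ M₁ M₂ : Matrix (Fin n) (Fin n) ℝ,
      (∀ i j, 0 ≤ M₁ i j) ∧ (∀ j, ∑ i, M₁ i j = 1) ∧ M₁.transpose = M₁ ∧
      (∀ i j, 0 ≤ M₂ i j) ∧ (∀ j, ∑ i, M₂ i j = 1) ∧ M₂.transpose = M₂ ∧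
      ∀ π : Fin n → ℝ, (∀ i, 0 < π i) → ∑ i, π i = 1 →
        (M₁ * M₂) * Matrix.diagonal π ≠ Matrix.diagonal π * (M₁ * M₂).transpose := by
  let a : Fin n := ⟨0, by omega⟩
  let b : Fin n := ⟨1, by omega⟩
  let c : Fin n := ⟨2, by omega⟩
  have hM₁ := permMatrix_mem_colStochastic (R := ℝ) (σ := swap a b)
  have hM₂ := permMatrix_mem_colStochastic (R := ℝ) (σ := swap b c)
  refine ⟨(swap a b).permMatrix ℝ, (swap b c).permMatrix ℝ,
    fun _ _ => nonneg_of_mem_colStochastic hM₁, sum_col_of_mem_colStochastic hM₁, by simp,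
    fun _ _ => nonneg_of_mem_colStochastic hM₂, sum_col_of_mem_colStochastic hM₂, by simp,
    fun π hπ _ => ?_⟩
  rw [← permMatrix_mul]
  exact permMatrix_mul_diagonal_ne
    (swap_mul_swap_apply_apply_ne (by simp [a, b, Fin.ext_iff]) (by simp [a, c, Fin.ext_iff])
      (by simp [b, c, Fin.ext_iff]))
    (hπ _).ne'
end

section
/- For a fixed distribution vector π, the model GTR_π = {Markov matrices M with M D(π) = D(π) M^T} is multiplicatively closed if and only if it is abelian (all its elements commute); consequently, for n ≥ 3, GTR_π is not multiplicatively closed for any π. -/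
open Matrix

/-- The GTR model with fixed distribution vector `π`: Markov matrices `M`
(nonnegative entries, unit column sums) with `M D(π) = D(π) Mᵀ`. -/
def GTRpi {n : ℕ} (π : Fin n → ℝ) : Set (Matrix (Fin n) (Fin n) ℝ) :=
  {M | (∀ i j, 0 ≤ M i j) ∧ (∀ j, ∑ i, M i j = 1) ∧
    M * Matrix.diagonal π = Matrix.diagonal π * M.transpose}

lemma sum_two_support {n : ℕ} {x y : Fin n} (hxy : x ≠ y) (a b : ℝ) :
    ∑ i : Fin n, (if i = x then a else if i = y then b else 0) = a + b := by
  have h : ∀ i : Fin n, (if i = x then a else if i = y then b else 0)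
      = (if i = x then a else 0) + (if i = y then b else 0) := by
    intro i
    by_cases h1 : i = x <;> by_cases h2 : i = y <;> simp_all
  rw [Finset.sum_congr rfl (fun i _ => h i), Finset.sum_add_distrib]
  simp [Finset.sum_ite_eq']

/-- Auxiliary: the GTR matrix moving mass only between coordinates `x` and `y`. -/
def pairM {n : ℕ} (π : Fin n → ℝ) (x y : Fin n) : Matrix (Fin n) (Fin n) ℝ :=
  fun i j =>
    if j = x then (if i = x then 1 - π y else if i = y then π y else 0)
    else if j = y then (if i = y then 1 - π x else if i = x then π x else 0)
    else if i = j then 1 else 0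

lemma pairM_mem {n : ℕ} (π : Fin n → ℝ) (hπpos : ∀ i, 0 < π i)
    (hπsum : ∑ i, π i = 1) {x y : Fin n} (hxy : x ≠ y) :
    pairM π x y ∈ GTRpi π := by
  have hle : ∀ i, π i ≤ 1 := by
    intro i
    rw [← hπsum]
    exact Finset.single_le_sum (fun j _ => (hπpos j).le) (Finset.mem_univ i)
  refine ⟨?_, ?_, ?_⟩
  · intro i j
    unfold pairM
    have := hπpos x; have := hπpos y; have := hle x; have := hle y
    split_ifs <;> linarith
  · intro j
    by_cases hjx : j = x
    · subst hjx
      have h : ∀ i : Fin n, pairM π j y i j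
          = if i = j then 1 - π y else if i = y then π y else 0 := by
        intro i; simp [pairM]
      rw [Finset.sum_congr rfl fun i _ => h i, sum_two_support hxy]; ring
    · by_cases hjy : j = y
      · subst hjy
        have h : ∀ i : Fin n, pairM π x j i j
            = if i = j then 1 - π x else if i = x then π x else 0 := by
          intro i; simp [pairM, hxy.symm]
        rw [Finset.sum_congr rfl fun i _ => h i, sum_two_support hxy.symm]; ring
      · have h : ∀ i : Fin n, pairM π x y i j = if i = j then 1 else 0 := by
          intro i; simp [pairM, hjx, hjy]
        rw [Finset.sum_congr rfl fun i _ => h i]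
        simp [Finset.sum_ite_eq']
  · ext i j
    simp only [Matrix.mul_diagonal, Matrix.diagonal_mul, Matrix.transpose_apply]
    unfold pairM
    split_ifs <;> subst_vars <;>
      first | ring1 | simp_all

theorem gtr_pi_closed_iff_abelian_and_not_closed {n : ℕ}
    (π : Fin n → ℝ) (hπpos : ∀ i, 0 < π i) (hπsum : ∑ i, π i = 1) :
    ((∀ M₁ ∈ GTRpi π, ∀ M₂ ∈ GTRpi π, M₁ * M₂ ∈ GTRpi π) ↔
      (∀ M₁ ∈ GTRpi π, ∀ M₂ ∈ GTRpi π, M₁ * M₂ = M₂ * M₁)) ∧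
    (3 ≤ n → ¬ (∀ M₁ ∈ GTRpi π, ∀ M₂ ∈ GTRpi π, M₁ * M₂ ∈ GTRpi π)) := by
  -- The diagonal matrix is right-cancellable
  have hDinv : (Matrix.diagonal π) * (Matrix.diagonal fun i => (π i)⁻¹) = 1 := by
    rw [Matrix.diagonal_mul_diagonal]
    convert Matrix.diagonal_one with i
    exact mul_inv_cancel₀ (hπpos i).ne'
  have hcancel : ∀ A B : Matrix (Fin n) (Fin n) ℝ,
      A * Matrix.diagonal π = B * Matrix.diagonal π → A = B := by
    intro A B h
    calc A = A * (Matrix.diagonal π * Matrix.diagonal fun i => (π i)⁻¹) := by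
            rw [hDinv, mul_one]
      _ = B * (Matrix.diagonal π * Matrix.diagonal fun i => (π i)⁻¹) := by
            rw [← mul_assoc, h, mul_assoc]
      _ = B := by rw [hDinv, mul_one]
  have hiff : (∀ M₁ ∈ GTRpi π, ∀ M₂ ∈ GTRpi π, M₁ * M₂ ∈ GTRpi π) ↔
      (∀ M₁ ∈ GTRpi π, ∀ M₂ ∈ GTRpi π, M₁ * M₂ = M₂ * M₁) := by
    constructor
    · intro hclosed M₁ hM₁ M₂ hM₂
      obtain ⟨-, -, h12⟩ := hclosed M₁ hM₁ M₂ hM₂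
      obtain ⟨-, -, h1⟩ := hM₁
      obtain ⟨-, -, h2⟩ := hM₂
      apply hcancel
      calc M₁ * M₂ * Matrix.diagonal π
          = Matrix.diagonal π * (M₁ * M₂)ᵀ := h12
        _ = Matrix.diagonal π * M₂ᵀ * M₁ᵀ := by rw [Matrix.transpose_mul, mul_assoc]
        _ = M₂ * Matrix.diagonal π * M₁ᵀ := by rw [h2]
        _ = M₂ * (M₁ * Matrix.diagonal π) := by rw [mul_assoc, h1]
        _ = M₂ * M₁ * Matrix.diagonal π := by rw [mul_assoc]
    · intro hcomm M₁ hM₁ M₂ hM₂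
      obtain ⟨h1n, h1s, h1⟩ := hM₁
      obtain ⟨h2n, h2s, h2⟩ := hM₂
      refine ⟨?_, ?_, ?_⟩
      · intro i j
        rw [Matrix.mul_apply]
        exact Finset.sum_nonneg fun k _ => mul_nonneg (h1n i k) (h2n k j)
      · intro j
        simp only [Matrix.mul_apply]
        rw [Finset.sum_comm]
        calc ∑ k, ∑ i, M₁ i k * M₂ k j
            = ∑ k, (∑ i, M₁ i k) * M₂ k j := by
              simp [Finset.sum_mul]
          _ = ∑ k, M₂ k j := by simp [h1s]
          _ = 1 := h2s j
      · calc M₁ * M₂ * Matrix.diagonal π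
            = M₁ * (M₂ * Matrix.diagonal π) := by rw [mul_assoc]
          _ = M₁ * Matrix.diagonal π * M₂ᵀ := by rw [h2, mul_assoc]
          _ = Matrix.diagonal π * M₁ᵀ * M₂ᵀ := by rw [h1]
          _ = Matrix.diagonal π * (M₂ * M₁)ᵀ := by
              rw [Matrix.transpose_mul, mul_assoc]
          _ = Matrix.diagonal π * (M₁ * M₂)ᵀ := by
              rw [hcomm M₁ ⟨h1n, h1s, h1⟩ M₂ ⟨h2n, h2s, h2⟩]
  refine ⟨hiff, ?_⟩
  intro hn hclosed
  set a : Fin n := ⟨0, by omega⟩ with ha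
  set b : Fin n := ⟨1, by omega⟩ with hb
  set c : Fin n := ⟨2, by omega⟩ with hc
  have hab : a ≠ b := by simp [ha, hb, Fin.ext_iff]
  have hbc : b ≠ c := by simp [hb, hc, Fin.ext_iff]
  have hac : a ≠ c := by simp [ha, hc, Fin.ext_iff]
  have hM₁ := pairM_mem π hπpos hπsum hab
  have hM₂ := pairM_mem π hπpos hπsum hbc
  have hcomm := (hiff.mp hclosed) _ hM₁ _ hM₂
  have h1 : (pairM π a b * pairM π b c) a c = π a * π b := by
    rw [Matrix.mul_apply]
    have h : ∀ k : Fin n, pairM π a b a k * pairM π b c k c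
        = if k = b then π a * π b else 0 := by
      intro k
      by_cases hk : k = b
      · subst hk
        simp [pairM, hab, hbc, hac, hab.symm, hbc.symm, hac.symm]
      · by_cases hkc : k = c
        · subst hkc
          simp [pairM, hab, hbc, hac, hab.symm, hbc.symm, hac.symm, hk]
        · simp [pairM, hab, hbc, hac, hab.symm, hbc.symm, hac.symm, hk, hkc]
    rw [Finset.sum_congr rfl fun k _ => h k, Finset.sum_ite_eq']
    simp
  have h2 : (pairM π b c * pairM π a b) a c = 0 := by
    rw [Matrix.mul_apply]
    have h : ∀ k : Fin n, pairM π b c a k * pairM π a b k c = 0 := by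
      intro k
      by_cases hk : k = c
      · subst hk
        simp [pairM, hab, hbc, hac, hab.symm, hbc.symm, hac.symm]
      · simp [pairM, hab, hbc, hac, hab.symm, hbc.symm, hac.symm, hk]
    rw [Finset.sum_congr rfl fun k _ => h k]
    simp
  rw [hcomm, h2] at h1
  exact (mul_pos (hπpos a) (hπpos b)).ne' h1.symm
end

section
/- For each σ ∈ S_4, conjugation by the permutation matrix K_σ permutes the set {L_α, L_β, L_γ} of Kimura 3ST generators; i.e. the Kimura 3ST model has S_4 symmetry. -/
open Matrix

/-- Elementary rate matrices `L i j = E i j - E j j`. -/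
def Lmat (i j : Fin 4) : Matrix (Fin 4) (Fin 4) ℂ :=
  Matrix.single i j 1 - Matrix.single j j 1

noncomputable def Lα : Matrix (Fin 4) (Fin 4) ℂ :=
  Lmat 0 1 + Lmat 1 0 + Lmat 2 3 + Lmat 3 2

noncomputable def Lβ : Matrix (Fin 4) (Fin 4) ℂ :=
  Lmat 0 2 + Lmat 2 0 + Lmat 1 3 + Lmat 3 1

noncomputable def Lγ : Matrix (Fin 4) (Fin 4) ℂ :=
  Lmat 0 3 + Lmat 3 0 + Lmat 1 2 + Lmat 2 1

/-- The permutation matrix of `σ`, acting on the standard basis by `K σ *ᵥ e i = e (σ i)`. -/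
def Kmat (σ : Equiv.Perm (Fin 4)) : Matrix (Fin 4) (Fin 4) ℂ :=
  Matrix.of fun i j => if i = σ j then 1 else 0

/-! Writing `τ_α = (0 1)(2 3)`, `τ_β = (0 2)(1 3)`, `τ_γ = (0 3)(1 2)`, each generator is
`L_τ = ∑ⱼ L_{τ j, j} = K_τ - 1`. Since `σ ↦ K_σ` is multiplicative, conjugating `K_τ - 1` by `K_σ`
gives `K_{σ τ σ⁻¹} - 1`, and conjugation by `σ` permutes the fixed-point-free involutions of
`Fin 4`, which are exactly `τ_α, τ_β, τ_γ`. -/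

open Equiv

def fixedPointFreeInvolutions (α : Type*) : Set (Perm α) :=
  {τ | Function.Involutive τ ∧ ∀ a, τ a ≠ a}

theorem conj_mem_fixedPointFreeInvolutions {α : Type*} (σ : Perm α) {τ : Perm α}
    (hτ : τ ∈ fixedPointFreeInvolutions α) : σ * τ * σ⁻¹ ∈ fixedPointFreeInvolutions α := by
  obtain ⟨hinv, hfree⟩ := hτ
  refine ⟨fun a => by simp [hinv _], fun a h => hfree (σ⁻¹ a) ?_⟩
  simpa [Perm.mul_apply, ← Perm.eq_inv_iff_eq] using h

theorem image_conj_fixedPointFreeInvolutions {α : Type*} (σ : Perm α) :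
    (fun τ => σ * τ * σ⁻¹) '' fixedPointFreeInvolutions α = fixedPointFreeInvolutions α :=
  (Set.image_subset_iff.2 fun _ => conj_mem_fixedPointFreeInvolutions σ).antisymm
    fun τ hτ => ⟨σ⁻¹ * τ * σ⁻¹⁻¹, conj_mem_fixedPointFreeInvolutions σ⁻¹ hτ, by group⟩

theorem fixedPointFreeInvolutions_fin_four :
    fixedPointFreeInvolutions (Fin 4) =
      {swap 0 1 * swap 2 3, swap 0 2 * swap 1 3, swap 0 3 * swap 1 2} := by
  ext τ
  simp only [fixedPointFreeInvolutions, Function.Involutive, Set.mem_ofPred_eq, Set.mem_insert_iff,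
    Set.mem_singleton_iff]
  revert τ
  decide

theorem Kmat_eq_permMatrixHom (σ : Perm (Fin 4)) : Kmat σ = Matrix.permMatrixHom σ := by
  ext i j
  simp [Kmat, PEquiv.toMatrix_apply, Equiv.eq_symm_apply, eq_comm]

theorem Kmat_mul (σ τ : Perm (Fin 4)) : Kmat σ * Kmat τ = Kmat (σ * τ) := by
  simp only [Kmat_eq_permMatrixHom, map_mul]

theorem Kmat_one : Kmat 1 = 1 := by
  rw [Kmat_eq_permMatrixHom, map_one]

theorem inv_Kmat (σ : Perm (Fin 4)) : (Kmat σ)⁻¹ = Kmat σ⁻¹ :=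
  inv_eq_right_inv (by rw [Kmat_mul, mul_inv_cancel, Kmat_one])

theorem Kmat_mul_sub_one_mul_inv (σ τ : Perm (Fin 4)) :
    Kmat σ * (Kmat τ - 1) * (Kmat σ)⁻¹ = Kmat (σ * τ * σ⁻¹) - 1 := by
  rw [inv_Kmat, mul_sub, sub_mul, Kmat_mul, Kmat_mul, mul_one, Kmat_mul, mul_inv_cancel, Kmat_one]

theorem sum_single_apply_self (τ : Perm (Fin 4)) : ∑ j, Matrix.single (τ j) j (1 : ℂ) = Kmat τ := by
  ext a b
  rw [Matrix.sum_apply, Finset.sum_eq_single b (fun j _ hj => single_apply_of_col_ne _ _ hj _)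
    (by simp)]
  simp [Kmat, single_apply, eq_comm]

theorem sum_Lmat_apply_self (τ : Perm (Fin 4)) : ∑ j, Lmat (τ j) j = Kmat τ - 1 := by
  have hdiag : ∑ j : Fin 4, Matrix.single j j (1 : ℂ) = 1 := by
    simpa [Kmat_one] using sum_single_apply_self 1
  simp only [Lmat, Finset.sum_sub_distrib, sum_single_apply_self, hdiag]

theorem Lα_eq : Lα = Kmat (swap 0 1 * swap 2 3) - 1 := by
  rw [← sum_Lmat_apply_self, Fin.sum_univ_four, Lα]
  simp +decide only [Perm.mul_apply, swap_apply_def, ite_true, ite_false]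
  ac_rfl

theorem Lβ_eq : Lβ = Kmat (swap 0 2 * swap 1 3) - 1 := by
  rw [← sum_Lmat_apply_self, Fin.sum_univ_four, Lβ]
  simp +decide only [Perm.mul_apply, swap_apply_def, ite_true, ite_false]
  ac_rfl

theorem Lγ_eq : Lγ = Kmat (swap 0 3 * swap 1 2) - 1 := by
  rw [← sum_Lmat_apply_self, Fin.sum_univ_four, Lγ]
  simp +decide only [Perm.mul_apply, swap_apply_def, ite_true, ite_false]
  ac_rfl

theorem kimura3ST_has_S4_symmetry (σ : Equiv.Perm (Fin 4)) :
    (fun M => Kmat σ * M * (Kmat σ)⁻¹) '' {Lα, Lβ, Lγ} = {Lα, Lβ, Lγ} := by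
  have hgens : ({Lα, Lβ, Lγ} : Set (Matrix (Fin 4) (Fin 4) ℂ)) =
      (fun τ => Kmat τ - 1) '' fixedPointFreeInvolutions (Fin 4) := by
    rw [fixedPointFreeInvolutions_fin_four, Set.image_insert_eq, Set.image_insert_eq,
      Set.image_singleton, Lα_eq, Lβ_eq, Lγ_eq]
  rw [hgens, Set.image_image]
  simp only [Kmat_mul_sub_one_mul_inv]
  rw [← Set.image_image (fun τ => Kmat τ - 1) (fun τ => σ * τ * σ⁻¹),
    image_conj_fixedPointFreeInvolutions]
end
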